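/- Under the same setup (C nonnegative with zero diagonal and positive off-diagonal entries, $x \geq 0$ nonzero, $\gamma > 0$, $\delta > 0$, $n \geq 2$, and assuming $x^\top C \mathbf{1} > 0$), if $\lambda > \frac{[2 \max_{i,j}|H_{ij}| + \gamma \log(\frac{1}{\delta} x^\top C \mathbf{1})]_+}{\min_{i \neq j} C_{ij}}$ then $g'(\lambda) < 0$; consequently any maximizer $\lambda^\star \geq 0$ of $g$ satisfies $\lambda^\star \leq \frac{[2\max_{i,j}|H_{ij}| + \gamma \log(\frac{1}{\delta} x^\top C \mathbf{1})]_+}{\min_{i\neq j} C_{ij}}$. -/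

import Mathlib

open Finset

/-!
The derivative of the dual is `-δ + ∑ᵢ xᵢ ⟨pᵢ, Cᵢ⟩`, where `pᵢ` is the softmax of
`-(Hᵢ + λCᵢ)/γ`. Bounding the softmax normaliser from below by its diagonal term
`exp(-Hᵢᵢ/γ)` (recall `Cᵢᵢ = 0`) shows that the derivative is negative as soon as every
off-diagonal ratio `exp(-(Hᵢⱼ + λCᵢⱼ - Hᵢᵢ)/γ)` is below `δ / xᵀC1`, and the bound on `λ` is
exactly what makes this so. A maximiser beyond the bound would be an interior critical
point at which the derivative is negative.
-/

/-- The smooth (entropically regularized) dual objective. -/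
noncomputable def smoothDual' {n : ℕ} (H C : Matrix (Fin n) (Fin n) ℝ)
    (x : Fin n → ℝ) (δ γ : ℝ) (lam : ℝ) : ℝ :=
  -(lam * δ) + γ * ∑ i ∈ Finset.univ.filter (fun i => 0 < x i), x i * Real.log (x i)
    - γ * ∑ i, x i * Real.log (∑ j, Real.exp (-(H i j + lam * C i j) / γ))

theorem sum_mul_div_sum_le_sum_div_mul {ι : Type*} [Fintype ι] {w c : ι → ℝ}
    (hw : ∀ j, 0 < w j) (hc : ∀ j, 0 ≤ c j) (i : ι) :
    (∑ j, w j * c j) / ∑ j, w j ≤ ∑ j, w j / w i * c j := by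
  calc (∑ j, w j * c j) / ∑ j, w j
      ≤ (∑ j, w j * c j) / w i :=
        div_le_div_of_nonneg_left (sum_nonneg fun j _ => mul_nonneg (hw j).le (hc j)) (hw i)
          (single_le_sum (fun j _ => (hw j).le) (mem_univ i))
    _ = ∑ j, w j / w i * c j := by
        rw [sum_div]
        exact sum_congr rfl fun j _ => div_mul_eq_mul_div _ _ _ |>.symm

theorem sum_mul_lt_mul_sum {ι : Type*} [Fintype ι] {a r : ι → ℝ} {t : ℝ}
    (ha : ∀ i, 0 ≤ a i) (hr : ∀ i, 0 < a i → r i < t) (hpos : 0 < ∑ i, a i) :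
    ∑ i, a i * r i < t * ∑ i, a i := by
  obtain ⟨k, -, hk⟩ := exists_lt_of_sum_lt (f := fun _ => (0 : ℝ)) (by simpa using hpos)
  rw [mul_sum]
  refine sum_lt_sum (fun i _ => ?_) ⟨k, mem_univ k, by nlinarith [hr k hk]⟩
  rcases (ha i).eq_or_lt with h | h
  · simp [← h]
  · nlinarith [hr i h]

theorem exp_lt_of_bound_lt {a b c M m γ δ S lam : ℝ} (ha : |a| ≤ M) (hb : |b| ≤ M)
    (hm : 0 < m) (hmc : m ≤ c) (hγ : 0 < γ) (hδ : 0 < δ) (hS : 0 < S)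
    (hlam : max (2 * M + γ * Real.log (S / δ)) 0 / m < lam) :
    Real.exp (-(a + lam * c - b) / γ) < δ / S := by
  have hlam0 : 0 ≤ lam := (div_nonneg (le_max_right _ _) hm.le).trans hlam.le
  have hlamc : 2 * M + γ * Real.log (S / δ) < lam * c :=
    calc 2 * M + γ * Real.log (S / δ) ≤ max (2 * M + γ * Real.log (S / δ)) 0 := le_max_left _ _
      _ < lam * m := (div_lt_iff₀ hm).1 hlam
      _ ≤ lam * c := mul_le_mul_of_nonneg_left hmc hlam0
  have hlog : Real.log (δ / S) = -Real.log (S / δ) := by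
    rw [← Real.log_inv, inv_div]
  rw [← Real.lt_log_iff_exp_lt (div_pos hδ hS), hlog, div_lt_iff₀ hγ]
  linarith [neg_abs_le a, le_abs_self b]

theorem le_of_isMaxOn_Ici_of_deriv_neg {f : ℝ → ℝ} {a B c : ℝ} (haB : a ≤ B)
    (hmax : IsMaxOn f (Set.Ici a) c) (hderiv : ∀ x, B < x → deriv f x < 0) : c ≤ B := by
  by_contra! hc
  have hloc : IsLocalMax f c := hmax.isLocalMax (Ici_mem_nhds (haB.trans_lt hc))
  exact (hderiv c hc).ne hloc.deriv_eq_zero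

theorem hasDerivAt_smoothDual' {n : ℕ} (H C : Matrix (Fin n) (Fin n) ℝ) (x : Fin n → ℝ)
    {γ : ℝ} (hγ : γ ≠ 0) (δ lam : ℝ) :
    HasDerivAt (smoothDual' H C x δ γ)
      (-δ + ∑ i, x i * ((∑ j, Real.exp (-(H i j + lam * C i j) / γ) * C i j) /
        ∑ j, Real.exp (-(H i j + lam * C i j) / γ))) lam := by
  have hexp (i j : Fin n) : HasDerivAt (fun l => Real.exp (-(H i j + l * C i j) / γ))
      (Real.exp (-(H i j + lam * C i j) / γ) * (-C i j / γ)) lam := by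
    simpa using ((((hasDerivAt_id lam).mul_const (C i j)).const_add (H i j)).neg.div_const γ).exp
  have hlog (i : Fin n) :=
    (HasDerivAt.fun_sum fun j _ => hexp i j).log
      (sum_pos (fun j _ => Real.exp_pos _) ⟨i, mem_univ _⟩).ne'
  refine ((((hasDerivAt_id lam).mul_const δ).neg.add_const _).sub
    ((HasDerivAt.fun_sum fun i _ => (hlog i).const_mul (x i)).const_mul γ)).congr_deriv ?_
  simp only [one_mul, mul_sum, sum_div, ← sum_neg_distrib, sub_eq_add_neg]
  congr 1
  refine sum_congr rfl fun i _ => sum_congr rfl fun j _ => ?_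
  field_simp

theorem deriv_smoothDual'_neg {n : ℕ} {H C : Matrix (Fin n) (Fin n) ℝ}
    (hC0 : ∀ i j, 0 ≤ C i j) (hCd : ∀ i, C i i = 0) {x : Fin n → ℝ} (hx : ∀ i, 0 ≤ x i)
    {γ : ℝ} (hγ : γ ≠ 0) {δ lam : ℝ} (hxC : 0 < ∑ i, ∑ j, x i * C i j)
    (hlam : ∀ i j, i ≠ j →
      Real.exp (-(H i j + lam * C i j - H i i) / γ) < δ / ∑ i, ∑ j, x i * C i j) :
    deriv (smoothDual' H C x δ γ) lam < 0 := by
  rw [(hasDerivAt_smoothDual' H C x hγ δ lam).deriv, neg_add_lt_iff_lt_add, add_zero]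
  set r : Fin n → Fin n → ℝ := fun i j => Real.exp (-(H i j + lam * C i j - H i i) / γ)
  have hsoftmax (i : Fin n) : x i * ((∑ j, Real.exp (-(H i j + lam * C i j) / γ) * C i j) /
      ∑ j, Real.exp (-(H i j + lam * C i j) / γ)) ≤ ∑ j, x i * C i j * r i j := by
    refine (mul_le_mul_of_nonneg_left
      (sum_mul_div_sum_le_sum_div_mul (fun j => Real.exp_pos _) (hC0 i) i) (hx i)).trans_eq ?_
    rw [mul_sum]
    refine sum_congr rfl fun j _ => ?_
    simp only [r, ← Real.exp_sub, hCd]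
    ring_nf
  have hpairs := sum_mul_lt_mul_sum (t := δ / ∑ i, ∑ j, x i * C i j)
    (a := fun p : Fin n × Fin n => x p.1 * C p.1 p.2) (r := fun p => r p.1 p.2)
    (fun p => mul_nonneg (hx _) (hC0 _ _))
    (fun p hp => hlam _ _ fun h => by simp [h, hCd] at hp)
    (by rwa [Fintype.sum_prod_type' fun i j => x i * C i j])
  rw [Fintype.sum_prod_type' fun i j => x i * C i j * r i j,
    Fintype.sum_prod_type' fun i j => x i * C i j, div_mul_cancel₀ _ hxC.ne'] at hpairs
  exact (sum_le_sum fun i _ => hsoftmax i).trans_lt hpairs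

/-- for `λ` beyond the bound
`[2 max_{i,j}|H i j| + γ log((xᵀC1)/δ)]₊ / min_{i≠j} C i j`
the smooth dual has strictly negative derivative, and consequently any
maximizer `λ⋆ ≥ 0` of the smooth dual over `[0,∞)` satisfies `λ⋆ ≤` that bound. -/
theorem stmt_13 {n : ℕ} (hn : 2 ≤ n) (H C : Matrix (Fin n) (Fin n) ℝ)
    (hC0 : ∀ i j, 0 ≤ C i j) (hCd : ∀ i, C i i = 0)
    (hCo : ∀ i j : Fin n, i ≠ j → 0 < C i j)
    (x : Fin n → ℝ) (hx : ∀ i, 0 ≤ x i)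
    (γ : ℝ) (hγ : 0 < γ) (δ : ℝ) (hδ : 0 < δ)
    (hxC : 0 < ∑ i, ∑ j, x i * C i j) :
    (∀ lam : ℝ,
      (max (2 * (Finset.univ.sup' ⟨(⟨0, by omega⟩, ⟨0, by omega⟩), Finset.mem_univ _⟩
              fun p : Fin n × Fin n => |H p.1 p.2|)
            + γ * Real.log ((∑ i, ∑ j, x i * C i j) / δ)) 0) /
          ((Finset.univ.filter fun p : Fin n × Fin n => p.1 ≠ p.2).inf'
            ⟨(⟨0, by omega⟩, ⟨1, by omega⟩), by
              refine Finset.mem_filter.mpr ⟨Finset.mem_univ _, ?_⟩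
              simp [Prod.ext_iff, Fin.ext_iff]⟩
            fun p => C p.1 p.2) < lam →
        deriv (smoothDual' H C x δ γ) lam < 0) ∧
    (∀ lamstar : ℝ, 0 ≤ lamstar →
      (∀ lam : ℝ, 0 ≤ lam → smoothDual' H C x δ γ lam ≤ smoothDual' H C x δ γ lamstar) →
      lamstar ≤
        (max (2 * (Finset.univ.sup' ⟨(⟨0, by omega⟩, ⟨0, by omega⟩), Finset.mem_univ _⟩
              fun p : Fin n × Fin n => |H p.1 p.2|)
            + γ * Real.log ((∑ i, ∑ j, x i * C i j) / δ)) 0) /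
          ((Finset.univ.filter fun p : Fin n × Fin n => p.1 ≠ p.2).inf'
            ⟨(⟨0, by omega⟩, ⟨1, by omega⟩), by
              refine Finset.mem_filter.mpr ⟨Finset.mem_univ _, ?_⟩
              simp [Prod.ext_iff, Fin.ext_iff]⟩
            fun p => C p.1 p.2)) := by
  have hne₁ : (univ : Finset (Fin n × Fin n)).Nonempty :=
    ⟨(⟨0, by omega⟩, ⟨0, by omega⟩), mem_univ _⟩
  have hne₂ : (univ.filter fun p : Fin n × Fin n => p.1 ≠ p.2).Nonempty :=
    ⟨(⟨0, by omega⟩, ⟨1, by omega⟩), mem_filter.2 ⟨mem_univ _, by simp [Fin.ext_iff]⟩⟩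
  set M := univ.sup' hne₁ fun p : Fin n × Fin n => |H p.1 p.2|
  set m := (univ.filter fun p : Fin n × Fin n => p.1 ≠ p.2).inf' hne₂ fun p => C p.1 p.2
  set B := max (2 * M + γ * Real.log ((∑ i, ∑ j, x i * C i j) / δ)) 0 / m
  have hm : 0 < m := (lt_inf'_iff _).2 fun p hp => hCo _ _ (mem_filter.1 hp).2
  have hderiv (lam : ℝ) (hlam : B < lam) : deriv (smoothDual' H C x δ γ) lam < 0 :=
    deriv_smoothDual'_neg hC0 hCd hx hγ.ne' hxC fun i j hij =>
      exp_lt_of_bound_lt (le_sup' (fun p : Fin n × Fin n => |H p.1 p.2|) (mem_univ (i, j)))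
        (le_sup' (fun p : Fin n × Fin n => |H p.1 p.2|) (mem_univ (i, i))) hm
        (inf'_le _ (mem_filter.2 ⟨mem_univ (i, j), hij⟩)) hγ hδ hxC hlam
  exact ⟨hderiv, fun _ _ hmax =>
    le_of_isMaxOn_Ici_of_deriv_neg (div_nonneg (le_max_right _ _) hm.le) hmax hderiv⟩
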